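/- Let λ be a real number and set γ = 0, so that the map W becomes x̄ = −2x + 3x³ + √(3/2)·λ·y², ȳ = y + 3x²y − √(3/2)·λ·x·y. Define ψ(y) = (λ/√6)·y². Then: (i) the center-manifold invariance residual R(y) = ψ(y + 3y·ψ(y)² − √(3/2)·λ·y·ψ(y)) + 2·ψ(y) − 3·ψ(y)³ − √(3/2)·λ·y² satisfies R(y) = O(y⁴) as y → 0; (ii) the reduced map on the approximate center manifold satisfies, as an exact polynomial identity, r(y) := y + 3y·ψ(y)² − √(3/2)·λ·y·ψ(y) = y − (λ²/2)·y³ + (λ²/2)·y⁵; in particular r(0) = 0, r'(0) = 1, r''(0) = 0 and r'''(0) = −3λ². -/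

import Mathlib

open Asymptotics Filter

/-- The approximate center manifold x = ψ(y) = (λ/√6)y² at A = (0,0) for γ = 0. -/
noncomputable def ψ (lam y : ℝ) : ℝ := (lam / Real.sqrt 6) * y^2

/-- The center-manifold invariance residual for the map W with γ = 0,
i.e. x̄ = −2x + 3x³ + √(3/2)λy², ȳ = y + 3x²y − √(3/2)λxy, along x = ψ(y). -/
noncomputable def Rres (lam y : ℝ) : ℝ :=
  ψ lam (y + 3*y*(ψ lam y)^2 - Real.sqrt (3/2)*lam*y*(ψ lam y)) + 2*(ψ lam y)
    - (3*(ψ lam y)^3 + Real.sqrt (3/2)*lam*y^2)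

/-- The reduced map on the approximate center manifold. -/
noncomputable def r (lam y : ℝ) : ℝ :=
  y + 3*y*(ψ lam y)^2 - Real.sqrt (3/2)*lam*y*(ψ lam y)

lemma sqrt32 : Real.sqrt (3/2) = Real.sqrt 6 / 2 := by
  rw [show (3/2:ℝ) = 6/4 by norm_num, Real.sqrt_div (by norm_num) 4,
    show (4:ℝ) = 2^2 by norm_num, Real.sqrt_sq (by norm_num)]

lemma sqrt32_lam (lam : ℝ) : Real.sqrt (3/2) * lam = 3 * (lam / Real.sqrt 6) := by
  have h6 : Real.sqrt 6 ^ 2 = 6 := Real.sq_sqrt (by norm_num)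
  have hne : Real.sqrt 6 ≠ 0 := by positivity
  rw [sqrt32]
  field_simp
  linear_combination lam * h6

lemma r_eq (lam y : ℝ) : r lam y = y - (lam^2/2)*y^3 + (lam^2/2)*y^5 := by
  have h6 : Real.sqrt 6 ^ 2 = 6 := Real.sq_sqrt (by norm_num)
  have hne : Real.sqrt 6 ≠ 0 := by positivity
  unfold r ψ
  rw [sqrt32]
  field_simp
  ring_nf
  linear_combination (-(y^5*lam^2)) * h6

lemma key1 (b y : ℝ) : HasDerivAt (fun x : ℝ => x - b*x^3 + b*x^5)
    (1 - b*(3*y^2) + b*(5*y^4)) y := by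
  have h3 := (hasDerivAt_pow 3 y).const_mul b
  have h5 := (hasDerivAt_pow 5 y).const_mul b
  refine (((hasDerivAt_id' y).sub h3).add h5).congr_deriv ?_
  norm_num

lemma key2 (b y : ℝ) : HasDerivAt (fun x : ℝ => 1 - b*(3*x^2) + b*(5*x^4))
    (-(b*(3*(2*y))) + b*(5*(4*y^3))) y := by
  have h2 := ((hasDerivAt_pow 2 y).const_mul (3:ℝ)).const_mul b
  have h4 := ((hasDerivAt_pow 4 y).const_mul (5:ℝ)).const_mul b
  refine (((hasDerivAt_const y (1:ℝ)).sub h2).add h4).congr_deriv ?_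
  push_cast; ring

lemma key3 (b y : ℝ) : HasDerivAt (fun x : ℝ => -(b*(3*(2*x))) + b*(5*(4*x^3)))
    (-(b*6) + b*(20*(3*y^2))) y := by
  have h1 := ((hasDerivAt_id y).const_mul (2:ℝ)).const_mul (3:ℝ) |>.const_mul b |>.neg
  have h3 := ((hasDerivAt_pow 3 y).const_mul (4:ℝ)).const_mul (5:ℝ)
  refine (h1.add (h3.const_mul b)).congr_deriv ?_
  push_cast; ring

/-- For γ = 0: (i) the residual is O(y⁴) as y → 0; (ii) the reduced map equals
y − (λ²/2)y³ + (λ²/2)y⁵ exactly, with r(0)=0, r'(0)=1, r''(0)=0, r'''(0)=−3λ². -/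
theorem stmt_12 (lam : ℝ) :
    (Rres lam) =O[nhds (0:ℝ)] (fun y : ℝ => y^4) ∧
    (∀ y : ℝ, r lam y = y - (lam^2/2)*y^3 + (lam^2/2)*y^5) ∧
    r lam 0 = 0 ∧
    deriv (r lam) 0 = 1 ∧
    iteratedDeriv 2 (r lam) 0 = 0 ∧
    iteratedDeriv 3 (r lam) 0 = -3*lam^2 := by
  set c := lam / Real.sqrt 6 with hc
  have hQ : ∀ y : ℝ, Rres lam y
      = y^4 * (3*c^3*(y^2-1)*(2 + 3*c^2*(y^4-y^2)) - 3*c^3*y^2) := by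
    intro y
    unfold Rres ψ
    rw [sqrt32_lam, ← hc]
    ring
  have hfun : r lam = fun y => y - (lam^2/2)*y^3 + (lam^2/2)*y^5 := funext (r_eq lam)
  have hd1 : deriv (r lam) = fun y => 1 - (lam^2/2)*(3*y^2) + (lam^2/2)*(5*y^4) := by
    funext y; rw [hfun]; exact (key1 _ y).deriv
  have hd2 : deriv (deriv (r lam))
      = fun y => -((lam^2/2)*(3*(2*y))) + (lam^2/2)*(5*(4*y^3)) := by
    funext y; rw [hd1]; exact (key2 _ y).deriv
  refine ⟨?_, r_eq lam, by rw [r_eq]; ring, by rw [hd1]; norm_num, ?_, ?_⟩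
  · have hO1 : (fun y : ℝ => 3*c^3*(y^2-1)*(2 + 3*c^2*(y^4-y^2)) - 3*c^3*y^2)
        =O[nhds (0:ℝ)] (fun _ => (1:ℝ)) := by
      apply Filter.Tendsto.isBigO_one
      exact (Continuous.tendsto (by continuity) 0)
    have h := (isBigO_refl (fun y : ℝ => y^4) (nhds 0)).mul hO1
    have heq : Rres lam = fun y : ℝ =>
        y^4 * (3*c^3*(y^2-1)*(2 + 3*c^2*(y^4-y^2)) - 3*c^3*y^2) := funext hQ
    rw [heq]
    simpa using h
  · rw [iteratedDeriv_succ, iteratedDeriv_one, hd2]; norm_num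
  · rw [iteratedDeriv_succ, iteratedDeriv_succ, iteratedDeriv_one, hd2]
    rw [show deriv (fun y : ℝ => -((lam^2/2)*(3*(2*y))) + (lam^2/2)*(5*(4*y^3))) 0
      = -((lam^2/2)*6) + (lam^2/2)*(20*(3*0^2)) from (key3 _ 0).deriv]
    ring
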